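/- arXiv:1712.03311 — 3 statements merged into one kernel-verified Lean document; each statement's English description precedes it below -/
import Mathlib

section
/- Suen's inequality: Let (Ω, μ) be a probability space, I a finite index set, and for each i ∈ I let θ_i : Ω → {0,1} be a measurable indicator random variable with P(θ_i = 1) = p_i. Let L be a dependency graph on I, i.e. a simple graph on vertex set I such that for any two disjoint subsets A, B ⊆ I with no edge of L between A and B, the families (θ_i)_{i∈A} and (θ_j)_{j∈B} are independent. Write i ∼ j if ij is an edge of L, let X = Σ_{i∈I} θ_i, m = E(X) = Σ_{i∈I} p_i, Δ = (1/2) Σ_{i∼j} E(θ_i θ_j), and δ = max_{i∈I} Σ_{j : j∼i} p_j. If Δ > 0 and δ > 0, then P(X = 0) ≤ exp( − min{ m²/(8Δ), m/2, m/(6δ) } ). -/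
/-!
Janson's argument. Put `ψ(a) = E ∏ᵢ (1 - a θᵢ)` (`thinProd`); then `ψ(0) = 1`, `P(X = 0) ≤ ψ(q)` for
`q ≤ 1`, and `-ψ'(a) = ∑ᵢ E[θᵢ ∏_{j ≠ i} (1 - a θⱼ)]`. In the `i`-th term, expand the factors of the
neighbours of `i` to first order (`1 - a ∑ θⱼ ≤ ∏ (1 - a θⱼ)`); by independence, the product over
the indices not adjacent to `i` (for the terms `θᵢθⱼ`: to `i` or `j`) then factors out. Removing from the product a set of indices of
total mean at most `δ` costs at most a factor `r(a) = 2 / (1 + √(1 - a/q))` as long as `qδ ≤ 1/4`,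
by strong induction on the index set. This yields `-ψ' ≥ (m - 2Δ a r(a)) ψ`; since
`a r(a) = 2q (1 - √(1 - a/q))` integrates to `2q²/3` over `[0, q]`, we get
`ψ(q) ≤ exp(-mq + 4Δq²/3)`, and `q = min(1, m/(4Δ), 1/(4δ))` gives the stated exponent.
-/

open MeasureTheory ProbabilityTheory Finset

namespace Suen

lemma mul_le_of_mul_le_of_le {c y z e : ℝ} (h : c * z ≤ e) (hy : 0 ≤ y) (hyz : y ≤ z)
    (he : 0 ≤ e) : c * y ≤ e := by
  rcases le_total 0 c with hc | hc
  · exact (mul_le_mul_of_nonneg_left hyz hc).trans h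
  · exact (mul_nonpos_of_nonpos_of_nonneg hc hy).trans he

variable {Ω I : Type*} {θ : I → Ω → ℝ}

def IsDependencyGraph [MeasurableSpace Ω] (L : SimpleGraph I) (θ : I → Ω → ℝ) (μ : Measure Ω) :
    Prop :=
  ∀ A B : Finset I, Disjoint A B → (∀ i ∈ A, ∀ j ∈ B, ¬ L.Adj i j) →
    IndepFun (fun x (i : A) => θ i x) (fun x (j : B) => θ j x) μ

def thinProd (θ : I → Ω → ℝ) (a : ℝ) (V : Finset I) (x : Ω) : ℝ := ∏ i ∈ V, (1 - a * θ i x)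

section Pointwise

variable {a : ℝ} {V W : Finset I} {x : Ω}

lemma one_sub_mul_nonneg (hθ : ∀ i x, θ i x ∈ Set.Icc (0 : ℝ) 1) (ha : a ≤ 1) (i : I) (x : Ω) :
    0 ≤ 1 - a * θ i x := by
  obtain ⟨h0, h1⟩ := hθ i x
  nlinarith

lemma one_sub_mul_le_one (hθ : ∀ i x, θ i x ∈ Set.Icc (0 : ℝ) 1) (ha : 0 ≤ a) (i : I) (x : Ω) :
    1 - a * θ i x ≤ 1 := by
  have := mul_nonneg ha (hθ i x).1
  linarith

lemma thinProd_nonneg (hθ : ∀ i x, θ i x ∈ Set.Icc (0 : ℝ) 1) (ha : a ≤ 1) :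
    0 ≤ thinProd θ a V x :=
  prod_nonneg fun i _ => one_sub_mul_nonneg hθ ha i x

lemma thinProd_anti [DecidableEq I] (hθ : ∀ i x, θ i x ∈ Set.Icc (0 : ℝ) 1) (ha0 : 0 ≤ a)
    (ha1 : a ≤ 1) (hVW : V ⊆ W) : thinProd θ a W x ≤ thinProd θ a V x :=
  prod_le_prod_of_subset_of_le_one hVW (fun i _ => one_sub_mul_nonneg hθ ha1 i x)
    fun i _ _ => one_sub_mul_le_one hθ ha0 i x

lemma thinProd_union [DecidableEq I] (h : Disjoint V W) :
    thinProd θ a (V ∪ W) x = thinProd θ a V x * thinProd θ a W x :=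
  prod_union h

lemma abs_thinProd_le (hθ : ∀ i x, θ i x ∈ Set.Icc (0 : ℝ) 1) :
    |thinProd θ a V x| ≤ (1 + |a|) ^ #V := by
  rw [thinProd, abs_prod, ← prod_const]
  refine prod_le_prod (fun _ _ => abs_nonneg _) fun i _ => ?_
  obtain ⟨h0, h1⟩ := hθ i x
  calc |1 - a * θ i x| ≤ 1 + |a| * θ i x := by
        simpa [abs_mul, abs_of_nonneg h0] using abs_sub (1 : ℝ) (a * θ i x)
    _ ≤ 1 + |a| := by nlinarith [abs_nonneg a]

lemma one_sub_mul_sum_le_thinProd [DecidableEq I] (hθ : ∀ i x, θ i x ∈ Set.Icc (0 : ℝ) 1)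
    (ha0 : 0 ≤ a) (ha1 : a ≤ 1) : 1 - a * ∑ i ∈ V, θ i x ≤ thinProd θ a V x := by
  induction V using Finset.induction_on with
  | empty => simp [thinProd]
  | @insert k V hk ih =>
    rw [sum_insert hk, thinProd, prod_insert hk, ← thinProd]
    have hk0 := one_sub_mul_nonneg hθ ha1 k x
    have hV0 : 0 ≤ ∑ i ∈ V, θ i x := sum_nonneg fun i _ => (hθ i x).1
    nlinarith [mul_le_mul_of_nonneg_left ih hk0, mul_nonneg (mul_nonneg ha0 (hθ k x).1)
      (mul_nonneg ha0 hV0)]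

lemma prod_apply_mem_Icc (hθ : ∀ i x, θ i x ∈ Set.Icc (0 : ℝ) 1) (A : Finset I) (x : Ω) :
    ∏ i ∈ A, θ i x ∈ Set.Icc (0 : ℝ) 1 :=
  ⟨prod_nonneg fun i _ => (hθ i x).1, prod_le_one (fun i _ => (hθ i x).1) fun i _ => (hθ i x).2⟩

end Pointwise

variable [MeasurableSpace Ω] {μ : Measure Ω}

section Integrals

variable {a : ℝ}

lemma measurable_thinProd (hθm : ∀ i, Measurable (θ i)) (a : ℝ) (V : Finset I) :
    Measurable (thinProd θ a V) :=
  Finset.measurable_prod V fun i _ => measurable_const.sub ((hθm i).const_mul a)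

lemma integral_eq_measureReal_eq_one {f : Ω → ℝ} (hf : Measurable f)
    (h01 : ∀ x, f x = 0 ∨ f x = 1) : ∫ x, f x ∂μ = μ.real {x | f x = 1} := by
  rw [← integral_indicator_one (s := {x | f x = 1}) (hf (measurableSet_singleton 1))]
  congr 1 with x
  rcases h01 x with h | h <;> simp [h]

variable [IsFiniteMeasure μ]

lemma integrable_mul_thinProd (hθm : ∀ i, Measurable (θ i))
    (hθ : ∀ i x, θ i x ∈ Set.Icc (0 : ℝ) 1) {f : Ω → ℝ} (hfm : Measurable f)
    (hf : ∀ x, f x ∈ Set.Icc (0 : ℝ) 1) (a : ℝ) (V : Finset I) :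
    Integrable (fun x => f x * thinProd θ a V x) μ :=
  .of_bound (hfm.mul (measurable_thinProd hθm a V)).aestronglyMeasurable ((1 + |a|) ^ #V) <|
    .of_forall fun x => by
      rw [Real.norm_eq_abs, abs_mul, abs_of_nonneg (hf x).1]
      exact (mul_le_of_le_one_left (abs_nonneg _) (hf x).2).trans (abs_thinProd_le hθ)

lemma integrable_thinProd (hθm : ∀ i, Measurable (θ i)) (hθ : ∀ i x, θ i x ∈ Set.Icc (0 : ℝ) 1)
    (a : ℝ) (V : Finset I) : Integrable (thinProd θ a V) μ := by
  simpa using integrable_mul_thinProd (μ := μ) (f := 1) hθm hθ measurable_const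
    (fun _ => unitInterval.one_mem) a V

lemma measureReal_sum_eq_zero_le_integral_thinProd [Fintype I] (hθm : ∀ i, Measurable (θ i))
    (hθ : ∀ i x, θ i x ∈ Set.Icc (0 : ℝ) 1) {a : ℝ} (ha : a ≤ 1) :
    μ.real {x | ∑ i, θ i x = 0} ≤ ∫ x, thinProd θ a univ x ∂μ := by
  have hms : MeasurableSet {x | ∑ i, θ i x = 0} :=
    (Finset.measurable_sum _ fun i _ => hθm i) (measurableSet_singleton 0)
  rw [← integral_indicator_one hms]
  refine integral_mono ((integrable_const 1).indicator hms) (integrable_thinProd hθm hθ a univ)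
    fun x => ?_
  by_cases hx : x ∈ {x | ∑ i, θ i x = 0}
  · have hzero := (sum_eq_zero_iff_of_nonneg fun i _ => (hθ i x).1).1 hx
    simp [thinProd, hzero]
  · simpa [Set.indicator_of_notMem hx] using thinProd_nonneg hθ ha

lemma integral_mul_thinProd_sub_le [DecidableEq I] (hθm : ∀ i, Measurable (θ i))
    (hθ : ∀ i x, θ i x ∈ Set.Icc (0 : ℝ) 1) {f : Ω → ℝ} (hfm : Measurable f)
    (hf : ∀ x, f x ∈ Set.Icc (0 : ℝ) 1) (ha0 : 0 ≤ a) (ha1 : a ≤ 1) {N R : Finset I}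
    (hNR : Disjoint N R) :
    ∫ x, f x * thinProd θ a R x ∂μ - ∫ x, f x * thinProd θ a (N ∪ R) x ∂μ ≤
      a * ∑ j ∈ N, ∫ x, f x * θ j x * thinProd θ a R x ∂μ := by
  have hpt : ∀ x, f x * thinProd θ a R x - f x * thinProd θ a (N ∪ R) x ≤
      ∑ j ∈ N, a * (f x * θ j x * thinProd θ a R x) := fun x => by
    have hsum : ∑ j ∈ N, a * (f x * θ j x * thinProd θ a R x) =
        a * (∑ j ∈ N, θ j x) * (f x * thinProd θ a R x) := by
      rw [mul_assoc, sum_mul, mul_sum]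
      exact sum_congr rfl fun j _ => by ring
    rw [hsum, thinProd_union hNR]
    nlinarith [mul_le_mul_of_nonneg_left (one_sub_mul_sum_le_thinProd (V := N) (x := x) hθ ha0 ha1)
      (mul_nonneg (hf x).1 (thinProd_nonneg (V := R) (x := x) hθ ha1))]
  have hint : ∀ j ∈ N, Integrable (fun x => a * (f x * θ j x * thinProd θ a R x)) μ :=
    fun j _ => (integrable_mul_thinProd hθm hθ (hfm.mul (hθm j))
      (fun x => unitInterval.mul_mem (hf x) (hθ j x)) a R).const_mul a
  have hR := integrable_mul_thinProd (μ := μ) hθm hθ hfm hf a R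
  have hNR := integrable_mul_thinProd (μ := μ) hθm hθ hfm hf a (N ∪ R)
  rw [← integral_sub hR hNR, mul_sum]
  simp_rw [← integral_const_mul a]
  rw [← integral_finsetSum _ hint]
  exact integral_mono (hR.sub hNR) (integrable_finsetSum _ hint) hpt

end Integrals

section Independence

variable {L : SimpleGraph I}

lemma IsDependencyGraph.integral_prod_mul_thinProd (hL : IsDependencyGraph L θ μ)
    (hθm : ∀ i, Measurable (θ i)) {A B : Finset I} (hAB : Disjoint A B)
    (hnadj : ∀ i ∈ A, ∀ j ∈ B, ¬ L.Adj i j) (a : ℝ) :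
    ∫ x, (∏ i ∈ A, θ i x) * thinProd θ a B x ∂μ =
      (∫ x, ∏ i ∈ A, θ i x ∂μ) * ∫ x, thinProd θ a B x ∂μ := by
  have hF : Measurable fun y : A → ℝ => ∏ i, y i := by fun_prop
  have hG : Measurable fun y : B → ℝ => ∏ j, (1 - a * y j) := by fun_prop
  have h := ((hL A B hAB hnadj).comp hF hG).integral_fun_mul_eq_mul_integral
    (hF.comp (measurable_pi_lambda _ fun i => hθm i)).aestronglyMeasurable
    (hG.comp (measurable_pi_lambda _ fun j => hθm j)).aestronglyMeasurable
  simp only [thinProd, ← prod_coe_sort A, ← prod_coe_sort B]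
  exact h

variable [Fintype I] [DecidableEq I] [DecidableRel L.Adj] [IsFiniteMeasure μ]

lemma IsDependencyGraph.integral_prod_mul_thinProd_le (hL : IsDependencyGraph L θ μ)
    (hθm : ∀ i, Measurable (θ i)) (hθ : ∀ i x, θ i x ∈ Set.Icc (0 : ℝ) 1) {a : ℝ} (ha0 : 0 ≤ a)
    (ha1 : a ≤ 1) {A U : Finset I} (hAU : Disjoint A U) :
    ∫ x, (∏ i ∈ A, θ i x) * thinProd θ a U x ∂μ ≤
      (∫ x, ∏ i ∈ A, θ i x ∂μ) * ∫ x, thinProd θ a (U \ A.biUnion (L.neighborFinset ·)) x ∂μ := by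
  have hA : Measurable fun x => ∏ i ∈ A, θ i x := Finset.measurable_prod A fun i _ => hθm i
  have hA1 := prod_apply_mem_Icc hθ A
  calc ∫ x, (∏ i ∈ A, θ i x) * thinProd θ a U x ∂μ
      ≤ ∫ x, (∏ i ∈ A, θ i x) * thinProd θ a (U \ A.biUnion (L.neighborFinset ·)) x ∂μ :=
        integral_mono (integrable_mul_thinProd hθm hθ hA hA1 a _)
          (integrable_mul_thinProd hθm hθ hA hA1 a _) fun x =>
          mul_le_mul_of_nonneg_left (thinProd_anti hθ ha0 ha1 sdiff_subset)
            (prod_nonneg fun i _ => (hθ i x).1)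
    _ = _ := by
        refine hL.integral_prod_mul_thinProd hθm (hAU.mono_right sdiff_subset) ?_ a
        intro i hi j hj hij
        exact (mem_sdiff.1 hj).2 (mem_biUnion.2 ⟨i, hi, (L.mem_neighborFinset i j).2 hij⟩)

lemma IsDependencyGraph.integral_apply_mul_thinProd_le (hL : IsDependencyGraph L θ μ)
    (hθm : ∀ i, Measurable (θ i)) (hθ : ∀ i x, θ i x ∈ Set.Icc (0 : ℝ) 1) {a : ℝ} (ha0 : 0 ≤ a)
    (ha1 : a ≤ 1) {k : I} {U : Finset I} (hkU : k ∉ U) :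
    ∫ x, θ k x * thinProd θ a U x ∂μ ≤
      (∫ x, θ k x ∂μ) * ∫ x, thinProd θ a (U \ L.neighborFinset k) x ∂μ := by
  simpa using hL.integral_prod_mul_thinProd_le hθm hθ ha0 ha1 (disjoint_singleton_left.2 hkU)

end Independence

section Ratio

variable {L : SimpleGraph I} [Fintype I] [DecidableRel L.Adj] {a δ r : ℝ}

lemma sum_integral_le_of_subset_neighborFinset (hθ : ∀ i x, θ i x ∈ Set.Icc (0 : ℝ) 1)
    (hδ : ∀ k, ∑ j ∈ L.neighborFinset k, ∫ x, θ j x ∂μ ≤ δ) {k : I} {S : Finset I}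
    (hS : S ⊆ L.neighborFinset k) : ∑ j ∈ S, ∫ x, θ j x ∂μ ≤ δ :=
  (sum_le_sum_of_subset_of_nonneg hS fun j _ _ => integral_nonneg fun x => (hθ j x).1).trans (hδ k)

variable [DecidableEq I] [IsFiniteMeasure μ]

lemma IsDependencyGraph.integral_thinProd_le_mul (hL : IsDependencyGraph L θ μ)
    (hθm : ∀ i, Measurable (θ i)) (hθ : ∀ i x, θ i x ∈ Set.Icc (0 : ℝ) 1) (ha0 : 0 ≤ a)
    (ha1 : a ≤ 1) (hδ0 : 0 ≤ δ) (hδ : ∀ k, ∑ j ∈ L.neighborFinset k, ∫ x, θ j x ∂μ ≤ δ)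
    (hr : 1 + a * δ * r ^ 2 ≤ r) {U V : Finset I} (hUV : U ⊆ V)
    (hmass : ∑ j ∈ V \ U, ∫ x, θ j x ∂μ ≤ δ) :
    ∫ x, thinProd θ a U x ∂μ ≤ r * ∫ x, thinProd θ a V x ∂μ := by
  induction V using Finset.strongInduction generalizing U with
  | H V ih =>
  have hr0 : 0 ≤ r := by nlinarith [mul_nonneg (mul_nonneg ha0 hδ0) (sq_nonneg r)]
  have hU0 : 0 ≤ ∫ x, thinProd θ a U x ∂μ := integral_nonneg fun x => thinProd_nonneg hθ ha1
  have hterm : ∀ k ∈ V \ U, ∫ x, θ k x * thinProd θ a U x ∂μ ≤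
      (∫ x, θ k x ∂μ) * (r * ∫ x, thinProd θ a U x ∂μ) := by
    intro k hk
    obtain ⟨hkV, hkU⟩ := mem_sdiff.1 hk
    have hUk : ∫ x, thinProd θ a (U \ L.neighborFinset k) x ∂μ ≤
        r * ∫ x, thinProd θ a U x ∂μ := by
      refine ih U (ssubset_of_subset_of_ne hUV ?_) sdiff_subset ?_
      · rintro rfl; exact hkU hkV
      · rw [sdiff_sdiff_self_left]
        exact sum_integral_le_of_subset_neighborFinset hθ hδ inter_subset_right
    exact (hL.integral_apply_mul_thinProd_le hθm hθ ha0 ha1 hkU).trans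
      (mul_le_mul_of_nonneg_left hUk (integral_nonneg fun x => (hθ k x).1))
  have hsum : ∑ k ∈ V \ U, ∫ x, θ k x * thinProd θ a U x ∂μ ≤
      δ * (r * ∫ x, thinProd θ a U x ∂μ) :=
    (sum_le_sum hterm).trans <| by
      rw [← sum_mul]; exact mul_le_mul_of_nonneg_right hmass (by positivity)
  have hdiff := integral_mul_thinProd_sub_le (μ := μ) hθm hθ measurable_const
    (fun _ => unitInterval.one_mem) ha0 ha1 (N := V \ U) (R := U) sdiff_disjoint
  simp only [one_mul, sdiff_union_of_subset hUV] at hdiff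
  have hAB : ∫ x, thinProd θ a U x ∂μ ≤
      ∫ x, thinProd θ a V x ∂μ + a * δ * r * ∫ x, thinProd θ a U x ∂μ := by
    nlinarith [mul_le_mul_of_nonneg_left hsum ha0]
  nlinarith [mul_le_mul_of_nonneg_left hAB hr0, mul_le_mul_of_nonneg_right hr hU0]

lemma IsDependencyGraph.integral_mul_mul_thinProd_le (hL : IsDependencyGraph L θ μ)
    (hθm : ∀ i, Measurable (θ i)) (hθ : ∀ i x, θ i x ∈ Set.Icc (0 : ℝ) 1) (ha0 : 0 ≤ a)
    (ha1 : a ≤ 1) (hδ0 : 0 ≤ δ) (hδ : ∀ k, ∑ j ∈ L.neighborFinset k, ∫ x, θ j x ∂μ ≤ δ)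
    (hr : 1 + a * δ * r ^ 2 ≤ r) {i j : I} (hij : L.Adj i j) {R : Finset I} (hiR : i ∉ R)
    (hjR : j ∉ R) (hRi : Disjoint R (L.neighborFinset i)) :
    ∫ x, θ i x * θ j x * thinProd θ a R x ∂μ ≤
      (∫ x, θ i x * θ j x ∂μ) * (r * ∫ x, thinProd θ a R x ∂μ) := by
  have h := hL.integral_prod_mul_thinProd_le hθm hθ ha0 ha1 (A := {i, j}) (U := R)
    (by simp [hiR, hjR])
  simp only [prod_pair hij.ne, biUnion_insert, singleton_biUnion] at h
  refine h.trans (mul_le_mul_of_nonneg_left ?_ (integral_nonneg fun x =>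
    mul_nonneg (hθ i x).1 (hθ j x).1))
  refine hL.integral_thinProd_le_mul hθm hθ ha0 ha1 hδ0 hδ hr sdiff_subset ?_
  rw [sdiff_sdiff_self_left]
  refine sum_integral_le_of_subset_neighborFinset hθ hδ (k := j) fun l hl => ?_
  obtain ⟨hlR, hlN⟩ := mem_inter.1 hl
  exact (mem_union.1 hlN).resolve_left (disjoint_left.1 hRi hlR)

lemma IsDependencyGraph.sub_mul_integral_thinProd_le (hL : IsDependencyGraph L θ μ)
    (hθm : ∀ i, Measurable (θ i)) (hθ : ∀ i x, θ i x ∈ Set.Icc (0 : ℝ) 1) (ha0 : 0 ≤ a)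
    (ha1 : a ≤ 1) (hδ0 : 0 ≤ δ) (hδ : ∀ k, ∑ j ∈ L.neighborFinset k, ∫ x, θ j x ∂μ ≤ δ)
    (hr : 1 + a * δ * r ^ 2 ≤ r) (i : I) :
    (∫ x, θ i x ∂μ - a * r * ∑ j ∈ L.neighborFinset i, ∫ x, θ i x * θ j x ∂μ) *
        ∫ x, thinProd θ a univ x ∂μ ≤
      ∫ x, θ i x * thinProd θ a (univ.erase i) x ∂μ := by
  set N := L.neighborFinset i
  set R := univ.erase i \ N
  have hNi : N ⊆ univ.erase i := fun j hj =>
    mem_erase.2 ⟨((L.mem_neighborFinset i j).1 hj).ne', mem_univ j⟩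
  have hiR : i ∉ R := by simp [R]
  have hdiff := integral_mul_thinProd_sub_le (μ := μ) hθm hθ (hθm i) (hθ i) ha0 ha1
    (N := N) (R := R) disjoint_sdiff
  rw [union_sdiff_of_subset hNi] at hdiff
  have hfirst : ∫ x, θ i x * thinProd θ a R x ∂μ =
      (∫ x, θ i x ∂μ) * ∫ x, thinProd θ a R x ∂μ := by
    have hnadj : ∀ j ∈ R, ¬ L.Adj i j := fun j hj hij =>
      (mem_sdiff.1 hj).2 ((L.mem_neighborFinset i j).2 hij)
    simpa using hL.integral_prod_mul_thinProd hθm (A := {i}) (B := R)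
      (disjoint_singleton_left.2 hiR) (by simpa using hnadj) a
  have hsecond : ∑ j ∈ N, ∫ x, θ i x * θ j x * thinProd θ a R x ∂μ ≤
      (∑ j ∈ N, ∫ x, θ i x * θ j x ∂μ) * (r * ∫ x, thinProd θ a R x ∂μ) := by
    rw [sum_mul]
    exact sum_le_sum fun j hj => hL.integral_mul_mul_thinProd_le hθm hθ ha0 ha1 hδ0 hδ hr
      ((L.mem_neighborFinset i j).1 hj) hiR (fun hjR => (mem_sdiff.1 hjR).2 hj) sdiff_disjoint
  refine mul_le_of_mul_le_of_le (by nlinarith [mul_le_mul_of_nonneg_left hsecond ha0])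
    (integral_nonneg fun x => thinProd_nonneg hθ ha1)
    (integral_mono (integrable_thinProd hθm hθ a _) (integrable_thinProd hθm hθ a _) fun x =>
      thinProd_anti hθ ha0 ha1 (subset_univ R))
    (integral_nonneg fun x => mul_nonneg (hθ i x).1 (thinProd_nonneg hθ ha1))

lemma IsDependencyGraph.sub_mul_integral_thinProd_le_sum (hL : IsDependencyGraph L θ μ)
    (hθm : ∀ i, Measurable (θ i)) (hθ : ∀ i x, θ i x ∈ Set.Icc (0 : ℝ) 1) (ha0 : 0 ≤ a)
    (ha1 : a ≤ 1) (hδ0 : 0 ≤ δ) (hδ : ∀ k, ∑ j ∈ L.neighborFinset k, ∫ x, θ j x ∂μ ≤ δ)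
    (hr : 1 + a * δ * r ^ 2 ≤ r) :
    (∑ i, ∫ x, θ i x ∂μ - a * r * ∑ i, ∑ j ∈ L.neighborFinset i, ∫ x, θ i x * θ j x ∂μ) *
        ∫ x, thinProd θ a univ x ∂μ ≤
      ∑ i, ∫ x, θ i x * thinProd θ a (univ.erase i) x ∂μ := by
  rw [mul_sum, ← sum_sub_distrib, sum_mul]
  exact sum_le_sum fun i _ => hL.sub_mul_integral_thinProd_le hθm hθ ha0 ha1 hδ0 hδ hr i

end Ratio

section Derivative

variable [DecidableEq I] [IsFiniteMeasure μ]

lemma hasDerivAt_integral_thinProd (hθm : ∀ i, Measurable (θ i))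
    (hθ : ∀ i x, θ i x ∈ Set.Icc (0 : ℝ) 1) (V : Finset I) (a : ℝ) :
    HasDerivAt (fun b => ∫ x, thinProd θ b V x ∂μ)
      (-∑ i ∈ V, ∫ x, θ i x * thinProd θ a (V.erase i) x ∂μ) a := by
  have hderiv : ∀ x b, HasDerivAt (fun b => thinProd θ b V x)
      (-∑ i ∈ V, θ i x * thinProd θ b (V.erase i) x) b := fun x b => by
    have := HasDerivAt.fun_finsetProd (u := V) (x := b) (f := fun i b => 1 - b * θ i x)
      (f' := fun i => -θ i x)
      fun i _ => by simpa using ((hasDerivAt_id b).mul_const (θ i x)).const_sub 1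
    simpa [thinProd, sum_neg_distrib, mul_comm] using this
  have hbound : ∀ x, ∀ b ∈ Metric.ball a 1,
      ‖-∑ i ∈ V, θ i x * thinProd θ b (V.erase i) x‖ ≤ #V * (2 + |a|) ^ #V := by
    intro x b hb
    have hb' : 1 + |b| ≤ 2 + |a| := by
      rw [Metric.mem_ball, Real.dist_eq] at hb
      linarith [abs_sub_abs_le_abs_sub b a]
    rw [norm_neg, ← nsmul_eq_mul]
    refine (norm_sum_le _ _).trans (sum_le_card_nsmul _ _ _ fun i _ => ?_)
    rw [Real.norm_eq_abs, abs_mul, abs_of_nonneg (hθ i x).1]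
    calc θ i x * |thinProd θ b (V.erase i) x| ≤ |thinProd θ b (V.erase i) x| :=
          mul_le_of_le_one_left (abs_nonneg _) (hθ i x).2
      _ ≤ (1 + |b|) ^ #(V.erase i) := abs_thinProd_le hθ
      _ ≤ (1 + |b|) ^ #V := pow_le_pow_right₀ (by linarith [abs_nonneg b]) card_erase_le
      _ ≤ (2 + |a|) ^ #V := pow_le_pow_left₀ (by positivity) hb' _
  have hint : ∀ i ∈ V, Integrable (fun x => θ i x * thinProd θ a (V.erase i) x) μ :=
    fun i _ => integrable_mul_thinProd hθm hθ (hθm i) (hθ i) a _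
  obtain ⟨-, h⟩ := hasDerivAt_integral_of_dominated_loc_of_deriv_le (μ := μ)
    (F := fun b x => thinProd θ b V x) (Metric.ball_mem_nhds a one_pos)
    (.of_forall fun b => (measurable_thinProd hθm b V).aestronglyMeasurable)
    (integrable_thinProd hθm hθ a V) (integrable_finsetSum _ hint).neg.aestronglyMeasurable
    (.of_forall hbound) (integrable_const _) (.of_forall fun x b _ => hderiv x b)
  rwa [integral_neg, integral_finsetSum _ hint] at h

end Derivative

section Analysis

open Real Set

lemma le_mul_exp_sub_of_hasDerivAt {f f' g G : ℝ → ℝ} {c : ℝ} (hc : 0 ≤ c)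
    (hf : ∀ t, HasDerivAt f (f' t) t) (hG : ∀ t, HasDerivAt G (g t) t)
    (hfg : ∀ t ∈ Ioo 0 c, f' t ≤ -(g t * f t)) : f c ≤ f 0 * exp (G 0 - G c) := by
  have hanti : AntitoneOn (fun t => f t * exp (G t)) (Icc 0 c) := by
    refine antitoneOn_of_hasDerivWithinAt_nonpos (convex_Icc 0 c)
      (fun t _ => ((hf t).mul (hG t).exp).continuousAt.continuousWithinAt)
      (fun t _ => ((hf t).mul (hG t).exp).hasDerivWithinAt) fun t ht => ?_
    rw [interior_Icc] at ht
    nlinarith [hfg t ht, exp_pos (G t)]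
  have h := hanti ⟨le_rfl, hc⟩ ⟨hc, le_rfl⟩ hc
  rw [exp_sub, mul_div_assoc', le_div_iff₀ (exp_pos _)]
  exact h

noncomputable def suenK (q a : ℝ) : ℝ := 2 * q * a + 4 * q ^ 2 / 3 * ((1 - a / q) ^ (3 / 2 : ℝ) - 1)

lemma hasDerivAt_suenK {q : ℝ} (hq : q ≠ 0) (a : ℝ) :
    HasDerivAt (suenK q) (2 * q * (1 - √(1 - a / q))) a := by
  have h := (((hasDerivAt_id' a).div_const q).const_sub 1).rpow_const (p := 3 / 2)
    (Or.inr (by norm_num))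
  refine (((hasDerivAt_id' a).const_mul (2 * q)).add
    ((h.sub_const 1).const_mul (4 * q ^ 2 / 3))).congr_deriv ?_
  rw [sqrt_eq_rpow]
  norm_num
  field_simp
  ring

lemma suenK_zero (q : ℝ) : suenK q 0 = 0 := by simp [suenK]

lemma suenK_self {q : ℝ} (hq : q ≠ 0) : suenK q q = 2 / 3 * q ^ 2 := by
  simp [suenK, hq]
  ring

noncomputable def suenRatio (q t : ℝ) : ℝ := 2 / (1 + √(1 - t / q))

lemma one_add_mul_sq_le {q δ s : ℝ} (hqδ : q * δ ≤ 1 / 4) (hs0 : 0 ≤ s) (hs1 : s ≤ 1) :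
    1 + q * (1 - s ^ 2) * δ * (2 / (1 + s)) ^ 2 ≤ 2 / (1 + s) := by
  have h : q * (1 - s ^ 2) * δ * (2 / (1 + s)) ^ 2 = 4 * (q * δ) * (1 - s) / (1 + s) := by
    field_simp; ring
  have h' : 2 / (1 + s) - (1 + 4 * (q * δ) * (1 - s) / (1 + s)) =
      (1 - s) * (1 - 4 * (q * δ)) / (1 + s) := by
    field_simp; ring
  rw [h, ← sub_nonneg, h']
  exact div_nonneg (mul_nonneg (by linarith) (by linarith)) (by linarith)

lemma suenRatio_spec {q δ t : ℝ} (hq : 0 < q) (ht0 : 0 ≤ t) (htq : t ≤ q) (hqδ : q * δ ≤ 1 / 4) :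
    1 + t * δ * suenRatio q t ^ 2 ≤ suenRatio q t ∧
      t * suenRatio q t = 2 * q * (1 - √(1 - t / q)) := by
  have hs2 : √(1 - t / q) ^ 2 = 1 - t / q :=
    sq_sqrt (by rw [sub_nonneg, div_le_one hq]; exact htq)
  have hs1 : √(1 - t / q) ≤ 1 := sqrt_le_one.2 (by linarith [div_nonneg ht0 hq.le])
  have hs0 : 0 ≤ √(1 - t / q) := sqrt_nonneg _
  unfold suenRatio
  generalize √(1 - t / q) = s at hs0 hs1 hs2 ⊢
  have ht : t = q * (1 - s ^ 2) := by rw [hs2]; field_simp; ring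
  refine ⟨?_, ?_⟩ <;> rw [ht]
  · exact one_add_mul_sq_le hqδ hs0 hs1
  · have : 1 + s ≠ 0 := by positivity
    field_simp; ring

lemma exists_suen_parameter {m Δ δ : ℝ} (hm : 0 < m) (hΔ : 0 < Δ) (hδ : 0 < δ) :
    ∃ q, 0 < q ∧ q ≤ 1 ∧ q * δ ≤ 1 / 4 ∧
      min (m ^ 2 / (8 * Δ)) (min (m / 2) (m / (6 * δ))) ≤ q * m - 2 / 3 * (2 * Δ) * q ^ 2 := by
  refine ⟨min 1 (min (m / (4 * Δ)) (1 / (4 * δ))), by positivity, min_le_left _ _, ?_, ?_⟩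
  · calc min 1 (min (m / (4 * Δ)) (1 / (4 * δ))) * δ ≤ 1 / (4 * δ) * δ :=
          mul_le_mul_of_nonneg_right ((min_le_right _ _).trans (min_le_right _ _)) hδ.le
      _ = 1 / 4 := by field_simp
  · set q := min 1 (min (m / (4 * Δ)) (1 / (4 * δ)))
    have hM : min (m ^ 2 / (8 * Δ)) (min (m / 2) (m / (6 * δ))) ≤ 2 / 3 * m * q := by
      have h0 : 0 ≤ 2 / 3 * m := by positivity
      rw [mul_min_of_nonneg _ _ h0, mul_min_of_nonneg _ _ h0]
      refine le_min ?_ (le_min ?_ ?_)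
      · exact (min_le_right _ _).trans ((min_le_left _ _).trans (by linarith))
      · calc _ ≤ m ^ 2 / (8 * Δ) := min_le_left _ _
          _ ≤ m ^ 2 / (6 * Δ) := by gcongr; norm_num
          _ = 2 / 3 * m * (m / (4 * Δ)) := by field_simp; ring
      · calc _ ≤ m / (6 * δ) := (min_le_right _ _).trans (min_le_right _ _)
          _ = 2 / 3 * m * (1 / (4 * δ)) := by field_simp; norm_num
    have hqΔ : q * Δ ≤ m / 4 := by
      have hq : q ≤ m / (4 * Δ) := (min_le_right _ _).trans (min_le_left _ _)
      calc q * Δ ≤ m / (4 * Δ) * Δ := by gcongr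
        _ = m / 4 := by field_simp
    nlinarith [mul_le_mul_of_nonneg_left hqΔ (by positivity : (0 : ℝ) ≤ q)]

end Analysis

section Main

variable [Fintype I] [DecidableEq I] {L : SimpleGraph I} [DecidableRel L.Adj]
  [IsProbabilityMeasure μ]

theorem IsDependencyGraph.measureReal_sum_eq_zero_le_exp (hL : IsDependencyGraph L θ μ)
    (hθm : ∀ i, Measurable (θ i)) (hθ : ∀ i x, θ i x ∈ Set.Icc (0 : ℝ) 1) {q δ : ℝ}
    (hq0 : 0 < q) (hq1 : q ≤ 1) (hδ0 : 0 ≤ δ) (hqδ : q * δ ≤ 1 / 4)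
    (hδ : ∀ k, ∑ j ∈ L.neighborFinset k, ∫ x, θ j x ∂μ ≤ δ) :
    μ.real {x | ∑ i, θ i x = 0} ≤ Real.exp (-(q * ∑ i, ∫ x, θ i x ∂μ) +
      2 / 3 * (∑ i, ∑ j ∈ L.neighborFinset i, ∫ x, θ i x * θ j x ∂μ) * q ^ 2) := by
  set m := ∑ i, ∫ x, θ i x ∂μ
  set D := ∑ i, ∑ j ∈ L.neighborFinset i, ∫ x, θ i x * θ j x ∂μ
  have hψ := le_mul_exp_sub_of_hasDerivAt hq0.le (hasDerivAt_integral_thinProd (μ := μ) hθm hθ univ)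
    (G := fun t => m * t - D * suenK q t)
    (fun t => ((hasDerivAt_id' t).const_mul m).sub ((hasDerivAt_suenK hq0.ne' t).const_mul D))
    fun t ht => by
      obtain ⟨hr, htr⟩ := suenRatio_spec hq0 ht.1.le ht.2.le hqδ
      have h := hL.sub_mul_integral_thinProd_le_sum hθm hθ ht.1.le (ht.2.le.trans hq1) hδ0 hδ hr
      rw [htr] at h
      linarith
  calc μ.real {x | ∑ i, θ i x = 0} ≤ ∫ x, thinProd θ q univ x ∂μ :=
        measureReal_sum_eq_zero_le_integral_thinProd hθm hθ hq1
    _ ≤ _ := hψ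
    _ = _ := by simp [thinProd, suenK_zero, suenK_self hq0.ne']; ring_nf

end Main

end Suen

open Suen Finset in
theorem suen_inequality_general
    {Ω : Type*} [MeasurableSpace Ω] (μ : Measure Ω) [IsProbabilityMeasure μ]
    {I : Type*} [Fintype I]
    (θ : I → Ω → ℝ)
    (hθmeas : ∀ i, Measurable (θ i))
    (hθ01 : ∀ i x, θ i x = 0 ∨ θ i x = 1)
    (p : I → ℝ) (hp : ∀ i, p i = (μ {x | θ i x = 1}).toReal)
    (L : SimpleGraph I) [DecidableRel L.Adj]
    -- L is a dependency graph: subfamilies indexed by disjoint sets of vertices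
    -- with no edge of L between them are independent
    (hdep : ∀ A B : Finset I, Disjoint A B →
      (∀ i ∈ A, ∀ j ∈ B, ¬ L.Adj i j) →
      IndepFun (fun x => fun i : A => θ i x) (fun x => fun j : B => θ j x) μ)
    (m Δ δ : ℝ)
    (hm : m = ∑ i, p i)
    (hΔ : Δ = (1 / 2) * ∑ i, ∑ j,
      if L.Adj i j then (∫ x, θ i x * θ j x ∂μ) else 0)
    (hδ : δ = ⨆ i, ∑ j, if L.Adj i j then p j else 0)
    (hΔpos : 0 < Δ) (hδpos : 0 < δ) :
    (μ {x | ∑ i, θ i x = 0}).toReal ≤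
      Real.exp (-(min (m ^ 2 / (8 * Δ)) (min (m / 2) (m / (6 * δ))))) := by
  classical
  have hθ : ∀ i x, θ i x ∈ Set.Icc (0 : ℝ) 1 := fun i x => by
    rcases hθ01 i x with h | h <;> simp [h]
  have hpθ : ∀ i, ∫ x, θ i x ∂μ = p i := fun i =>
    (integral_eq_measureReal_eq_one (hθmeas i) (hθ01 i)).trans (hp i).symm
  have hδ' : ∀ k, ∑ j ∈ L.neighborFinset k, ∫ x, θ j x ∂μ ≤ δ := fun k => by
    simp_rw [hpθ, L.neighborFinset_eq_filter, sum_filter, hδ]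
    exact le_ciSup (f := fun i => ∑ j, if L.Adj i j then p j else 0)
      (Set.finite_range _).bddAbove k
  have hD : ∑ i, ∑ j ∈ L.neighborFinset i, ∫ x, θ i x * θ j x ∂μ = 2 * Δ := by
    simp_rw [L.neighborFinset_eq_filter, sum_filter, hΔ]
    ring
  rcases le_or_gt m 0 with hm0 | hm0
  · have hmin : min (m ^ 2 / (8 * Δ)) (min (m / 2) (m / (6 * δ))) ≤ m / 2 :=
      (min_le_right _ _).trans (min_le_left _ _)
    calc (μ {x | ∑ i, θ i x = 0}).toReal ≤ 1 := measureReal_le_one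
      _ ≤ _ := Real.one_le_exp (by linarith)
  obtain ⟨q, hq0, hq1, hqδ, hmin⟩ := exists_suen_parameter hm0 hΔpos hδpos
  have h := IsDependencyGraph.measureReal_sum_eq_zero_le_exp hdep hθmeas hθ hq0 hq1 hδpos.le hqδ hδ'
  rw [hD] at h
  simp_rw [hpθ, ← hm] at h
  exact h.trans (Real.exp_le_exp.2 (by linarith))

theorem suen_inequality
    {Ω : Type*} [MeasurableSpace Ω] (μ : Measure Ω) [IsProbabilityMeasure μ]
    {I : Type*} [Fintype I] [Nonempty I]
    (θ : I → Ω → ℝ)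
    (hθmeas : ∀ i, Measurable (θ i))
    (hθ01 : ∀ i x, θ i x = 0 ∨ θ i x = 1)
    (p : I → ℝ) (hp : ∀ i, p i = (μ {x | θ i x = 1}).toReal)
    (L : SimpleGraph I) [DecidableRel L.Adj]
    -- L is a dependency graph: subfamilies indexed by disjoint sets of vertices
    -- with no edge of L between them are independent
    (hdep : ∀ A B : Finset I, Disjoint A B →
      (∀ i ∈ A, ∀ j ∈ B, ¬ L.Adj i j) →
      IndepFun (fun x => fun i : A => θ i x) (fun x => fun j : B => θ j x) μ)
    (m Δ δ : ℝ)
    (hm : m = ∑ i, p i)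
    (hΔ : Δ = (1 / 2) * ∑ i, ∑ j,
      if L.Adj i j then (∫ x, θ i x * θ j x ∂μ) else 0)
    (hδ : δ = ⨆ i, ∑ j, if L.Adj i j then p j else 0)
    (hΔpos : 0 < Δ) (hδpos : 0 < δ) :
    (μ {x | ∑ i, θ i x = 0}).toReal ≤
      Real.exp (-(min (m ^ 2 / (8 * Δ)) (min (m / 2) (m / (6 * δ))))) :=
  suen_inequality_general μ θ hθmeas hθ01 p hp L hdep m Δ δ hm hΔ hδ hΔpos hδpos
end

section
/- Let 0 < p < 1 and q = 1 − p. Then log(p³ + q³) / log(p² + q²) ≥ 3/2, where log denotes the natural logarithm. -/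
theorem log_cube_div_log_sq_ge_three_halves
    (p q : ℝ) (hp0 : 0 < p) (hp1 : p < 1) (hq : q = 1 - p) :
    Real.log (p ^ 3 + q ^ 3) / Real.log (p ^ 2 + q ^ 2) ≥ 3 / 2 := by
  have hq0 : 0 < q := by rw [hq]; linarith
  have hq1 : q < 1 := by rw [hq]; linarith
  have ha0 : 0 < p ^ 2 + q ^ 2 := by positivity
  have hb0 : 0 < p ^ 3 + q ^ 3 := by positivity
  have ha1 : p ^ 2 + q ^ 2 < 1 := by nlinarith
  have hb1 : p ^ 3 + q ^ 3 < 1 := by nlinarith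
  have hla : Real.log (p ^ 2 + q ^ 2) < 0 := Real.log_neg ha0 ha1
  have hkey : (p ^ 3 + q ^ 3) ^ 2 ≤ (p ^ 2 + q ^ 2) ^ 3 := by nlinarith [sq_nonneg (p - q), sq_nonneg (p*q), mul_pos hp0 hq0, sq_nonneg (p^2 - q^2)]
  have h2 : Real.log ((p ^ 3 + q ^ 3) ^ 2) ≤ Real.log ((p ^ 2 + q ^ 2) ^ 3) :=
    Real.log_le_log (by positivity) hkey
  rw [Real.log_pow, Real.log_pow] at h2
  rw [ge_iff_le, le_div_iff_of_neg hla]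
  push_cast at h2
  linarith
end

section
/- Let p : ℕ → ℝ be a sequence such that for all sufficiently large n, (log n)²/n^{1/2} < p(n) ≤ 1 − 1/log n. For n ∈ ℕ define ε(n) = 2·log( (log n)² / p(n) ) / log n, q(n) = 1 − p(n), ρ(n) = p(n)² + q(n)², and k(n) = 2·(1 − ε(n))·log n / log(1/ρ(n)). Then (k(n) + 1)·log n − (1/64)·p(n)·n^{ε(n)} → −∞ as n → ∞. -/
/-!
Write `L = log n`. Since `n ^ ε = (L² / p)²`, the subtracted term equals `L⁴ / (64 p)`. On the other
side `log (1/ρ) ≥ 1 - ρ = 2 p q ≥ 2 p / L`, and `ε ≥ 0` because `p ≤ 1 ≤ L²`, so `k L ≤ L³ / p`.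
Hence the expression is at most `L³ / p + L - L⁴ / (64 p) ≤ -L` once `L ≥ 256`.
-/

open Filter Real

lemma two_mul_mul_one_sub_le_log_inv (p : ℝ) :
    2 * p * (1 - p) ≤ log (1 / (p ^ 2 + (1 - p) ^ 2)) := by
  have hρ : 0 < p ^ 2 + (1 - p) ^ 2 := by nlinarith [sq_nonneg (2 * p - 1)]
  rw [one_div, log_inv]
  nlinarith [log_le_sub_one_of_pos hρ]

lemma two_mul_one_sub_mul_div_log_inv_mul_le {p L e : ℝ} (hL : 0 < L) (hp : 0 < p)
    (hpL : p ≤ 1 - 1 / L) (he : 0 ≤ e) :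
    2 * (1 - e) * L / log (1 / (p ^ 2 + (1 - p) ^ 2)) * L ≤ L ^ 3 / p := by
  set D := log (1 / (p ^ 2 + (1 - p) ^ 2))
  have hD : 2 * p / L ≤ D := calc
    2 * p / L = 2 * p * (1 / L) := by ring
    _ ≤ 2 * p * (1 - p) := by gcongr; linarith
    _ ≤ D := two_mul_mul_one_sub_le_log_inv p
  have hD0 : 0 < D := lt_of_lt_of_le (by positivity) hD
  calc 2 * (1 - e) * L / D * L ≤ 2 * L * L / D := by
        rw [div_mul_eq_mul_div]; gcongr; nlinarith
    _ ≤ 2 * L * L / (2 * p / L) := by gcongr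
    _ = L ^ 3 / p := by field_simp

lemma cube_div_add_two_mul_le_pow_four_div {p L : ℝ} (hL : 256 ≤ L) (hp : 0 < p)
    (hp1 : p ≤ 1) : L ^ 3 / p + 2 * L ≤ L ^ 4 / (64 * p) := by
  rw [div_add' _ _ _ hp.ne', div_le_div_iff₀ hp (by positivity)]
  have key : 64 * L ^ 3 + 128 * L * p ≤ L ^ 4 := by
    nlinarith [mul_le_mul_of_nonneg_right hL (by positivity : (0 : ℝ) ≤ L ^ 3),
      mul_le_mul_of_nonneg_right hL (by positivity : (0 : ℝ) ≤ L)]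
  nlinarith [mul_le_mul_of_nonneg_right key hp.le]

theorem union_bound_exponent_tendsto_neg_infty
    (p ε ρ k : ℕ → ℝ)
    (hp : ∀ᶠ n : ℕ in atTop,
      (Real.log n) ^ 2 / (n : ℝ) ^ ((1 : ℝ) / 2) < p n ∧ p n ≤ 1 - 1 / Real.log n)
    (hε : ∀ n, ε n = 2 * Real.log ((Real.log n) ^ 2 / p n) / Real.log n)
    (hρ : ∀ n, ρ n = (p n) ^ 2 + (1 - p n) ^ 2)
    (hk : ∀ n, k n = 2 * (1 - ε n) * Real.log n / Real.log (1 / ρ n)) :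
    Tendsto (fun n =>
      (k n + 1) * Real.log n - (1 / 64) * p n * Real.exp (ε n * Real.log n))
      atTop atBot := by
  have hlog : Tendsto (fun n : ℕ => log n) atTop atTop :=
    tendsto_log_atTop.comp tendsto_natCast_atTop_atTop
  refine tendsto_atBot_mono' atTop ?_ (tendsto_neg_atTop_atBot.comp hlog)
  filter_upwards [hp, hlog.eventually_ge_atTop 256] with n ⟨hlo, hhi⟩ hL
  simp only [Function.comp_apply, hk, hρ]
  have hεn := hε n
  set L := log n
  have hp0 : 0 < p n := lt_of_le_of_lt (by positivity) hlo
  have hp1 : p n ≤ 1 := by linarith [show 0 ≤ 1 / L by positivity]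
  have hε0 : 0 ≤ ε n := by
    rw [hεn]
    refine div_nonneg (mul_nonneg zero_le_two (log_nonneg ?_)) (by linarith)
    rw [le_div_iff₀ hp0]
    nlinarith
  have hexp : exp (ε n * L) = (L ^ 2 / p n) ^ 2 := by
    rw [hεn, div_mul_cancel₀ _ (by positivity), ← Nat.cast_ofNat, ← log_pow,
      exp_log (by positivity)]
  calc (2 * (1 - ε n) * L / log (1 / (p n ^ 2 + (1 - p n) ^ 2)) + 1) * L
        - 1 / 64 * p n * exp (ε n * L)
      = 2 * (1 - ε n) * L / log (1 / (p n ^ 2 + (1 - p n) ^ 2)) * L + L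
        - L ^ 4 / (64 * p n) := by rw [hexp]; field_simp
    _ ≤ L ^ 3 / p n + L - L ^ 4 / (64 * p n) := by
        gcongr; exact two_mul_one_sub_mul_div_log_inv_mul_le (by positivity) hp0 hhi hε0
    _ ≤ -L := by linarith [cube_div_add_two_mul_le_pow_four_div hL hp0 hp1]
end
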